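/- Let k ≥ 1 and let (λ₁,…,λ_k,μ₁,…,μ_k) ∈ ℂ^{2k} satisfy λ_i ≠ λ₁ and μ_i ≠ μ₁ for all 2 ≤ i ≤ k. Then D̃₁₁^{bulk,k}(λ,μ) = (−1)^{k−1} · ∏_{m=2}^k ( (1+(λ_m−λ₁)(μ_m−μ₁)) / ((λ_m−λ₁)²(μ_m−μ₁)²) ) · ( ∏_{m=2}^k ( 1 − (λ_m−λ₁)(μ_m−μ₁) − (λ_m−λ₁)·∂/∂λ_m ) ) ρ̃(λ,μ), where ∂/∂λ_m denotes the complex partial derivative in the variable λ_m (with all other variables, including μ_m, held fixed); the first-order operators in the product commute, so the product is unambiguous. -/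

import Mathlib

open ComplexConjugate Filter MeasureTheory Topology

noncomputable section

/-- Exponential polynomial `e_p(x) = ∑_{k=0}^p x^k/k!`. -/
def epol (p : ℕ) (x : ℂ) : ℂ := ∑ k ∈ Finset.range (p + 1), x ^ k / (Nat.factorial k : ℂ)

/-- `f_p(x) = (p+1)·e_p(x) - x·e_{p-1}(x)`, with `e_{-1} ≡ 0`. -/
def fpol (p : ℕ) (x : ℂ) : ℂ :=
  ((p : ℂ) + 1) * epol p x - x * (if p = 0 then 0 else epol (p - 1) x)

/-- The polynomial `𝔉_n(x,y,z)`. -/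
def Fgoth (n : ℕ) (x y z : ℂ) : ℂ :=
  epol n (x * y) * epol n (x * z) - epol n (x * y * z) * epol n x * (1 - x * (1 - y) * (1 - z))
    + ((1 - y) * (1 - z) / (Nat.factorial n : ℂ)) *
      (((x * y * z) ^ (n + 1) * epol n x - x ^ (n + 1) * epol n (x * y * z)) / (1 - y * z))

/-- The weight `ω(x,y|λ,μ) = (1/π)(1+(x-λ)(y-μ))e^{-xy}`. -/
def omegaW (x y l m : ℂ) : ℂ :=
  (1 / (Real.pi : ℂ)) * (1 + (x - l) * (y - m)) * Complex.exp (-(x * y))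

/-- The finite-`N` reduced kernel `κ^{(N)}(x̄,y|λ,λ̄)`. -/
def kapN (N : ℕ) (xb y l lb : ℂ) : ℂ :=
  (((N : ℂ) + 1) * Fgoth (N + 1) (l * lb) (xb / lb) (y / l)
      - l * lb * Fgoth N (l * lb) (xb / lb) (y / l)) /
    ((xb - lb) ^ 2 * (y - l) ^ 2 * fpol N (l * lb))

/-- The finite-`N` kernel `K₁₁^{(N)}(x,x̄,y,ȳ|λ,λ̄)`. -/
def K11N (N : ℕ) (x xb y yb l lb : ℂ) : ℂ := omegaW x xb l lb * kapN N xb y l lb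

/-- The finite-`N` kernel `K₁₂^{(N)}(x,x̄,y,ȳ|u,ū,v,v̄)`. -/
def K12N (N : ℕ) (x xb y yb u ub v vb : ℂ) : ℂ :=
  omegaW x xb u vb / kapN N ub v u vb *
    (kapN N ub v u vb * kapN N xb y u vb - kapN N ub y u vb * kapN N xb v u vb)

/-- `Z_N = π^N ∏_{j=1}^N j!`. -/
def Zconst (N : ℕ) : ℂ := (Real.pi : ℂ) ^ N * ∏ j ∈ Finset.Icc 1 N, (Nat.factorial j : ℂ)

/-- Vandermonde product `∏_{0 ≤ j < i < n} (v i - v j)`. -/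
def vdm (n : ℕ) (v : ℕ → ℂ) : ℂ := ∏ i ∈ Finset.range n, ∏ j ∈ Finset.range i, (v i - v j)

/-- Pads the `k` conditioned eigenvalues `lam` with the `N-k` integration variables `w`. -/
def pad (N k : ℕ) (lam : Fin k → ℂ) (w : Fin (N - k) → ℂ) (m : ℕ) : ℂ :=
  if h : m < k then lam ⟨m, h⟩ else if h2 : m - k < N - k then w ⟨m - k, h2⟩ else 0

/-- Conditional diagonal overlap `D₁₁^{(N,k)}`. -/
def D11 (N k : ℕ) (lam : Fin k → ℂ) : ℂ :=
  (Nat.factorial N : ℂ) / (Nat.factorial (N - k) : ℂ) / Zconst N *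
    Complex.exp (-(pad N k lam (fun _ => 0) 0 * conj (pad N k lam (fun _ => 0) 0))) *
    ∫ w : Fin (N - k) → ℂ,
      vdm (N - 1) (fun m => pad N k lam w (m + 1)) *
        conj (vdm (N - 1) (fun m => pad N k lam w (m + 1))) *
        ∏ m ∈ Finset.Icc 1 (N - 1),
          ((1 + (pad N k lam w m - pad N k lam w 0) *
                (conj (pad N k lam w m) - conj (pad N k lam w 0))) *
            Complex.exp (-(pad N k lam w m * conj (pad N k lam w m))))

/-- Conditional off-diagonal overlap `D₁₂^{(N,k)}`. -/
def D12 (N k : ℕ) (lam : Fin k → ℂ) : ℂ :=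
  -((Nat.factorial N : ℂ) / (Nat.factorial (N - k) : ℂ) / Zconst N *
    Complex.exp (-(pad N k lam (fun _ => 0) 0 * conj (pad N k lam (fun _ => 0) 0)
        + pad N k lam (fun _ => 0) 1 * conj (pad N k lam (fun _ => 0) 1))) *
    ∫ w : Fin (N - k) → ℂ,
      vdm (N - 1) (fun m => pad N k lam w (m + 1)) *
        vdm (N - 1) (fun m => conj (pad N k lam w (if m = 0 then 0 else m + 1))) *
        ∏ m ∈ Finset.Icc 2 (N - 1),
          ((1 + (pad N k lam w m - pad N k lam w 0) *
                (conj (pad N k lam w m) - conj (pad N k lam w 1))) *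
            Complex.exp (-(pad N k lam w m * conj (pad N k lam w m)))))

/-- `D̃₁₁^{(N,k)}` with the conjugated variables treated as independent. -/
def D11t (N k : ℕ) (lam mu : Fin k → ℂ) : ℂ :=
  (Nat.factorial N : ℂ) / (Nat.factorial (N - k) : ℂ) / Zconst N *
    Complex.exp (-(pad N k lam (fun _ => 0) 0 * pad N k mu (fun _ => 0) 0)) *
    ∫ w : Fin (N - k) → ℂ,
      vdm (N - 1) (fun m => pad N k lam w (m + 1)) *
        vdm (N - 1) (fun m => pad N k mu (fun i => conj (w i)) (m + 1)) *
        ∏ m ∈ Finset.Icc 1 (N - 1),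
          ((1 + (pad N k lam w m - pad N k lam w 0) *
                (pad N k mu (fun i => conj (w i)) m - pad N k mu (fun i => conj (w i)) 0)) *
            Complex.exp (-(pad N k lam w m * pad N k mu (fun i => conj (w i)) m)))

/-- `D̃₁₂^{(N,k)}` with the conjugated variables treated as independent. -/
def D12t (N k : ℕ) (lam mu : Fin k → ℂ) : ℂ :=
  -((Nat.factorial N : ℂ) / (Nat.factorial (N - k) : ℂ) / Zconst N *
    Complex.exp (-(pad N k lam (fun _ => 0) 0 * pad N k mu (fun _ => 0) 0
        + pad N k lam (fun _ => 0) 1 * pad N k mu (fun _ => 0) 1)) *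
    ∫ w : Fin (N - k) → ℂ,
      vdm (N - 1) (fun m => pad N k lam w (m + 1)) *
        vdm (N - 1) (fun m => pad N k mu (fun i => conj (w i)) (if m = 0 then 0 else m + 1)) *
        ∏ m ∈ Finset.Icc 2 (N - 1),
          ((1 + (pad N k lam w m - pad N k lam w 0) *
                (pad N k mu (fun i => conj (w i)) m - pad N k mu (fun i => conj (w i)) 1)) *
            Complex.exp (-(pad N k lam w m * pad N k mu (fun i => conj (w i)) m))))

/-- Bulk weight `ω^{bulk}`. -/
def omegaBulk (u ub l lb : ℂ) : ℂ :=
  (1 / (Real.pi : ℂ)) * (1 + (u - l) * (ub - lb)) * Complex.exp (-((u - l) * (ub - lb)))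

/-- Bulk reduced kernel `κ^{bulk}(ū,v|λ,λ̄) = (1+(w-1)e^w)/w²`, `w = (ū-λ̄)(v-λ)`. -/
def kapBulk (ub v l lb : ℂ) : ℂ :=
  (1 + ((ub - lb) * (v - l) - 1) * Complex.exp ((ub - lb) * (v - l))) /
    ((ub - lb) * (v - l)) ^ 2

def K11bulk (u ub v vb l lb : ℂ) : ℂ := omegaBulk u ub l lb * kapBulk ub v l lb

def K12bulk (x xb y yb u ub v vb : ℂ) : ℂ :=
  omegaBulk x xb u vb / kapBulk ub v u vb *
    (kapBulk ub v u vb * kapBulk xb y u vb - kapBulk ub y u vb * kapBulk xb v u vb)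

/-- `F(a) = (2π)^{-1/2} ∫₀^∞ e^{-(a+t)²/2} dt`, entire continuation of `(1/2)erfc(a/√2)`. -/
def Ferf (a : ℂ) : ℂ :=
  (1 / (Real.sqrt (2 * Real.pi) : ℂ)) *
    ∫ t in Set.Ioi (0 : ℝ), Complex.exp (-((a + (t : ℂ)) ^ 2) / 2)

/-- The function `H(a,b,c,d,f)` from the edge scaling limit. -/
def Hedge (a b c d f : ℂ) : ℂ :=
  -(Real.sqrt (2 * Real.pi) : ℂ) /
      (1 - (Real.sqrt (2 * Real.pi) : ℂ) * a * Complex.exp (a ^ 2 / 2) * Ferf a) *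
    deriv (fun x : ℂ =>
      Complex.exp ((a + x) ^ 2 / 2) *
        (Complex.exp (-f) * Ferf (b + x) * Ferf (c + x) - Ferf (d + x) * Ferf (a + x) +
          f * Ferf d * Ferf (a + x))) 0

def omegaEdge (x xb l lb : ℂ) : ℂ :=
  (1 / (Real.pi : ℂ)) * (1 + (x - l) * (xb - lb)) * Complex.exp (-(x * xb))

def kapEdge (xb y l lb : ℂ) : ℂ :=
  Complex.exp (xb * y) * Hedge (l + lb) (l + xb) (y + lb) (y + xb) ((l - y) * (lb - xb)) /
    ((l - y) ^ 2 * (lb - xb) ^ 2)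

def K11edge (x xb y yb l lb : ℂ) : ℂ := omegaEdge x xb l lb * kapEdge xb y l lb

def K12edge (x xb y yb u ub v vb : ℂ) : ℂ :=
  omegaEdge x xb u vb / kapEdge ub v u vb *
    (kapEdge ub v u vb * kapEdge xb y u vb - kapEdge ub y u vb * kapEdge xb v u vb)

/-- Index embedding `Fin (k-1) → Fin k`, `i ↦ i+1`. -/
def sh1 {k : ℕ} (i : Fin (k - 1)) : Fin k := ⟨i.val + 1, by have := i.isLt; omega⟩

/-- Index embedding `Fin (k-2) → Fin k`, `i ↦ i+2`. -/
def sh2 {k : ℕ} (i : Fin (k - 2)) : Fin k := ⟨i.val + 2, by have := i.isLt; omega⟩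

def ev0 {k : ℕ} (lam : Fin k → ℂ) : ℂ := if h : 0 < k then lam ⟨0, h⟩ else 0

def ev1 {k : ℕ} (lam : Fin k → ℂ) : ℂ := if h : 1 < k then lam ⟨1, h⟩ else 0

/-- The edge overlap function `D₁₁^{edge,k}`. -/
def D11edgeF (k : ℕ) (lam : Fin k → ℂ) : ℂ :=
  (1 / (Real.sqrt (2 * Real.pi ^ 3) : ℂ)) *
    (Complex.exp (-((ev0 lam + conj (ev0 lam)) ^ 2 / 2)) -
      (Real.sqrt (2 * Real.pi) : ℂ) * (ev0 lam + conj (ev0 lam)) *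
        Ferf (ev0 lam + conj (ev0 lam))) *
    Matrix.det (Matrix.of fun i j : Fin (k - 1) =>
      K11edge (lam (sh1 i)) (conj (lam (sh1 i))) (lam (sh1 j)) (conj (lam (sh1 j)))
        (ev0 lam) (conj (ev0 lam)))

/-- The bulk overlap function `D₁₁^{bulk,k}`. -/
def D11bulkF (k : ℕ) (lam : Fin k → ℂ) : ℂ :=
  (1 / (Real.pi : ℂ)) *
    Matrix.det (Matrix.of fun i j : Fin (k - 1) =>
      K11bulk (lam (sh1 i)) (conj (lam (sh1 i))) (lam (sh1 j)) (conj (lam (sh1 j)))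
        (ev0 lam) (conj (ev0 lam)))

/-- The bulk off-diagonal overlap function `D₁₂^{bulk,k}`. -/
def D12bulkF (k : ℕ) (lam : Fin k → ℂ) : ℂ :=
  -(1 / (Real.pi : ℂ) ^ 2) * kapBulk (conj (ev0 lam)) (ev1 lam) (ev0 lam) (conj (ev1 lam)) *
    Matrix.det (Matrix.of fun i j : Fin (k - 2) =>
      K12bulk (lam (sh2 i)) (conj (lam (sh2 i))) (lam (sh2 j)) (conj (lam (sh2 j)))
        (ev0 lam) (conj (ev0 lam)) (ev1 lam) (conj (ev1 lam)))

/-- The first-order differential operator `𝔇_m = 1 - (λ_m-λ₁)(μ_m-μ₁) - (λ_m-λ₁)∂/∂λ_m`. -/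
def Dop {k : ℕ} (m : Fin k) (g : (Fin k → ℂ) → (Fin k → ℂ) → ℂ)
    (lam mu : Fin k → ℂ) : ℂ :=
  (1 - (lam m - lam ⟨0, m.pos⟩) * (mu m - mu ⟨0, m.pos⟩)) * g lam mu -
    (lam m - lam ⟨0, m.pos⟩) * deriv (fun t => g (Function.update lam m t) mu) (lam m)

/-- Holomorphic extension `ρ̃` of the bulk `k`-point Ginibre correlation function. -/
def rhoT (k : ℕ) (lam mu : Fin k → ℂ) : ℂ :=
  ((Real.pi : ℂ) ^ k)⁻¹ * Complex.exp (-(∑ m, lam m * mu m)) *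
    Matrix.det (Matrix.of fun i j : Fin k => Complex.exp (mu i * lam j))

/-- Holomorphic extension `D̃₁₁^{bulk,k}` of the bulk conditional diagonal overlap. -/
def D11tBulk (k : ℕ) (lam mu : Fin k → ℂ) : ℂ :=
  ((Real.pi : ℂ) ^ k)⁻¹ *
    (∏ i : Fin (k - 1),
      (1 + (lam (sh1 i) - ev0 lam) * (mu (sh1 i) - ev0 mu)) /
          ((lam (sh1 i) - ev0 lam) ^ 2 * (mu (sh1 i) - ev0 mu) ^ 2) *
        Complex.exp (-((lam (sh1 i) - ev0 lam) * (mu (sh1 i) - ev0 mu)))) *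
    Matrix.det (Matrix.of fun m n : Fin (k - 1) =>
      1 - (1 - (mu (sh1 m) - ev0 mu) * (lam (sh1 n) - ev0 lam)) *
        Complex.exp ((mu (sh1 m) - ev0 mu) * (lam (sh1 n) - ev0 lam)))

/-- Monic bi-orthogonal polynomials `P_k(z)` for the weight `ω(·,·|λ,λ̄)`. -/
def Ppoly (l : ℂ) (k : ℕ) (z : ℂ) : ℂ :=
  ∑ m ∈ Finset.range (k + 1), l ^ (k - m) * (fpol m (l * conj l) / fpol k (l * conj l)) * z ^ m

/-- The reduced kernel `G^{(N)}(x,y,z)` as a double sum. -/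
def Gker (N : ℕ) (x y z : ℂ) : ℂ :=
  ∑ m ∈ Finset.range (N + 1), ∑ n ∈ Finset.range (N + 1),
    fpol m x * fpol n x * y ^ m * z ^ n *
      ∑ k ∈ Finset.Icc (max m n) N,
        x ^ k / ((Nat.factorial (k + 1) : ℂ) * fpol k x * fpol (k + 1) x)

end

/-!
Write `ρ̃ = π^{-k} e^{-Σ λ_m μ_m} det(e^{μ_i λ_j})`. The variable `λ_m` enters the determinant only
through column `m`, so `𝔇_m` multiplies that column by `1 - (λ_m-λ₁)(μ_i-μ₁)`; distinct operators
touch distinct columns. After all of them have acted, pulling `e^{μ_i λ₁}` out of row `i` and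
`e^{μ₁(λ_j-λ₁)}` out of column `j` leaves the matrix `(1 - x_i y_j) e^{x_i y_j}` with `x = μ - μ₁`,
`y = λ - λ₁`, whose first row and column consist of ones. Subtracting the first row from the others
reduces it to the `(k-1) × (k-1)` determinant of `D̃₁₁`, up to the sign `(-1)^{k-1}`.
-/

open Matrix

theorem hasDerivAt_det_updateCol {𝕜 n : Type*} [NontriviallyNormedField 𝕜] [Fintype n]
    [DecidableEq n] (M : Matrix n n 𝕜) (j : n) {c : 𝕜 → n → 𝕜} {c' : n → 𝕜} {t : 𝕜}
    (hc : HasDerivAt c c' t) :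
    HasDerivAt (fun s => (M.updateCol j (c s)).det) (M.updateCol j c').det t :=
  let φ := (LinearMap.proj j).comp (cramer M)
  (⟨φ, φ.continuous_on_pi⟩ : (n → 𝕜) →L[𝕜] 𝕜).hasFDerivAt.comp_hasDerivAt t hc

theorem det_eq_det_succ_sub_one {R : Type*} [CommRing R] {K : ℕ}
    (C : Matrix (Fin (K + 1)) (Fin (K + 1)) R) (hrow : ∀ j, C 0 j = 1) (hcol : ∀ i, C i 0 = 1) :
    C.det = (of fun i j : Fin K => C i.succ j.succ - 1).det := by
  set c : Fin (K + 1) → R := fun i => if i = 0 then 0 else 1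
  set C' : Matrix (Fin (K + 1)) (Fin (K + 1)) R := of fun i j => C i j - c i
  have hC'0 : ∀ j, C' 0 j = 1 := by simp [C', c, hrow]
  have hsub : C.det = C'.det :=
    det_eq_of_forall_row_eq_smul_add_const c 0 (by simp [c]) fun i j => by
      simp [C', hC'0]
  rw [hsub, det_succ_column_zero, Fin.sum_univ_succ, Finset.sum_eq_zero]
  · simp [C', c, hcol, submatrix]
  · intro i _
    simp [C', c, hcol]

theorem sum_sub_mul_sub_succ {R : Type*} [CommRing R] {K : ℕ} (v w : Fin (K + 1) → R) :
    ∑ i : Fin K, (v i.succ - v 0) * (w i.succ - w 0) =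
      ∑ m, v m * w m - ∑ m, w 0 * (v m - v 0) - ∑ m, w m * v 0 := by
  rw [← Finset.sum_sub_distrib, ← Finset.sum_sub_distrib, Fin.sum_univ_succ (n := K),
    sub_self, mul_zero, sub_zero, mul_comm (w 0), sub_self, zero_add]
  exact Finset.sum_congr rfl fun i _ => by ring

noncomputable section DopRho

variable {K : ℕ}

/-- `dopRho L` is `ρ̃` after applying `𝔇_m` for every `m ∈ L` (see `foldr_dop_rhoT`). -/
def dopRhoMatrix (L : List (Fin (K + 1))) (lam mu : Fin (K + 1) → ℂ) :
    Matrix (Fin (K + 1)) (Fin (K + 1)) ℂ :=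
  of fun i j => (if j ∈ L then 1 - (lam j - lam 0) * (mu i - mu 0) else 1) *
    Complex.exp (mu i * lam j)

def dopRho (L : List (Fin (K + 1))) (lam mu : Fin (K + 1) → ℂ) : ℂ :=
  ((Real.pi : ℂ) ^ (K + 1))⁻¹ * Complex.exp (-∑ m, lam m * mu m) * (dopRhoMatrix L lam mu).det

theorem dopRho_nil : dopRho [] = rhoT (K + 1) := by
  funext lam mu
  simp [dopRho, dopRhoMatrix, rhoT]

theorem dopRhoMatrix_cons (n : Fin (K + 1)) (L : List (Fin (K + 1))) (lam mu : Fin (K + 1) → ℂ) :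
    dopRhoMatrix (n :: L) lam mu = (dopRhoMatrix L lam mu).updateCol n
      fun i => (1 - (lam n - lam 0) * (mu i - mu 0)) * Complex.exp (mu i * lam n) := by
  ext i j
  rcases eq_or_ne j n with rfl | hj
  · simp [dopRhoMatrix]
  · simp [dopRhoMatrix, hj]

theorem dopRhoMatrix_update {n : Fin (K + 1)} {L : List (Fin (K + 1))} (hn : n ∉ L) (h0 : n ≠ 0)
    (lam mu : Fin (K + 1) → ℂ) (t : ℂ) :
    dopRhoMatrix L (Function.update lam n t) mu =
      (dopRhoMatrix L lam mu).updateCol n fun i => Complex.exp (mu i * t) := by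
  ext i j
  rcases eq_or_ne j n with rfl | hj
  · simp [dopRhoMatrix, hn]
  · simp [dopRhoMatrix, hj, h0.symm]

theorem dopRhoMatrix_updateCol_self {n : Fin (K + 1)} {L : List (Fin (K + 1))} (hn : n ∉ L)
    (lam mu : Fin (K + 1) → ℂ) :
    ((dopRhoMatrix L lam mu).updateCol n fun i => Complex.exp (mu i * lam n)) =
      dopRhoMatrix L lam mu := by
  ext i j
  rcases eq_or_ne j n with rfl | hj
  · simp [dopRhoMatrix, hn]
  · simp [hj]

theorem hasDerivAt_dopRho_update {n : Fin (K + 1)} {L : List (Fin (K + 1))} (hn : n ∉ L)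
    (h0 : n ≠ 0) (lam mu : Fin (K + 1) → ℂ) :
    HasDerivAt (fun t => dopRho L (Function.update lam n t) mu)
      (((Real.pi : ℂ) ^ (K + 1))⁻¹ * Complex.exp (-∑ m, lam m * mu m) *
        (-mu n * (dopRhoMatrix L lam mu).det +
          ((dopRhoMatrix L lam mu).updateCol n
            fun i => mu i * Complex.exp (mu i * lam n)).det)) (lam n) := by
  have hsum : HasDerivAt (fun t => ∑ m, Function.update lam n t m * mu m) (mu n) (lam n) := by
    have := HasDerivAt.fun_sum (u := Finset.univ) fun m _ =>
      (hasDerivAt_pi.1 (hasDerivAt_update lam n (lam n)) m).mul_const (mu m)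
    simpa [Pi.single_apply] using this
  have hcol : HasDerivAt (fun t i => Complex.exp (mu i * t))
      (fun i => mu i * Complex.exp (mu i * lam n)) (lam n) :=
    hasDerivAt_pi.2 fun i => by
      simpa [mul_comm] using ((hasDerivAt_id (lam n)).const_mul (mu i)).cexp
  have hdet := hasDerivAt_det_updateCol (dopRhoMatrix L lam mu) n hcol
  have hf : (fun t => dopRho L (Function.update lam n t) mu) = fun t =>
      ((Real.pi : ℂ) ^ (K + 1))⁻¹ * (Complex.exp (-∑ m, Function.update lam n t m * mu m) *
        ((dopRhoMatrix L lam mu).updateCol n fun i => Complex.exp (mu i * t)).det) := by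
    funext t
    rw [dopRho, dopRhoMatrix_update hn h0, mul_assoc]
  rw [hf]
  refine ((hsum.fun_neg.cexp.fun_mul hdet).const_mul _).congr_deriv ?_
  simp only [Function.update_eq_self, dopRhoMatrix_updateCol_self hn]
  ring

theorem dop_dopRho {n : Fin (K + 1)} {L : List (Fin (K + 1))} (hn : n ∉ L) (h0 : n ≠ 0) :
    Dop n (dopRho L) = dopRho (n :: L) := by
  funext lam mu
  set M := dopRhoMatrix L lam mu
  set M' := M.updateCol n fun i => mu i * Complex.exp (mu i * lam n)
  set a := lam n - lam 0
  have hcol : (fun i => (1 - a * (mu i - mu 0)) * Complex.exp (mu i * lam n)) =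
      (1 + a * mu 0) • (fun i => Complex.exp (mu i * lam n)) + (-a) • fun i => mu i *
        Complex.exp (mu i * lam n) := by
    funext i
    simp only [Pi.add_apply, Pi.smul_apply, smul_eq_mul]
    ring
  have hcons : (dopRhoMatrix (n :: L) lam mu).det = (1 + a * mu 0) * M.det - a * M'.det := by
    rw [dopRhoMatrix_cons, hcol, det_updateCol_add, det_updateCol_smul, det_updateCol_smul,
      dopRhoMatrix_updateCol_self hn]
    ring
  have h00 : (⟨0, n.pos⟩ : Fin (K + 1)) = 0 := rfl
  rw [Dop, h00, (hasDerivAt_dopRho_update hn h0 lam mu).deriv, dopRho, dopRho, hcons]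
  ring

theorem foldr_dop_rhoT {L : List (Fin (K + 1))} (hL : L.Nodup) (h0 : 0 ∉ L) :
    L.foldr Dop (rhoT (K + 1)) = dopRho L := by
  induction L with
  | nil => exact dopRho_nil.symm
  | cons n L ih =>
    rw [List.nodup_cons] at hL
    rw [List.mem_cons, not_or] at h0
    rw [List.foldr_cons, ih hL.2 h0.2, dop_dopRho hL.1 (Ne.symm h0.1)]

end DopRho

section ClosedForm

variable {K : ℕ}

theorem dopRho_eq_of_forall_mem {L : List (Fin (K + 1))} (hL : ∀ j, j ≠ 0 → j ∈ L)
    (lam mu : Fin (K + 1) → ℂ) :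
    dopRho L lam mu = ((Real.pi : ℂ) ^ (K + 1))⁻¹ * (-1) ^ K *
      (∏ i : Fin K, Complex.exp (-((lam i.succ - lam 0) * (mu i.succ - mu 0)))) *
      (of fun m n : Fin K => 1 - (1 - (mu m.succ - mu 0) * (lam n.succ - lam 0)) *
        Complex.exp ((mu m.succ - mu 0) * (lam n.succ - lam 0))).det := by
  set E : Matrix (Fin K) (Fin K) ℂ := of fun m n => 1 - (1 - (mu m.succ - mu 0) *
    (lam n.succ - lam 0)) * Complex.exp ((mu m.succ - mu 0) * (lam n.succ - lam 0))
  set C : Fin (K + 1) → Fin (K + 1) → ℂ := fun i j =>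
    (1 - (lam j - lam 0) * (mu i - mu 0)) * Complex.exp ((mu i - mu 0) * (lam j - lam 0))
  have hmat : dopRhoMatrix L lam mu = of fun i j =>
      Complex.exp (mu 0 * (lam j - lam 0)) * (Complex.exp (mu i * lam 0) * C i j) := by
    ext i j
    have hfac : (if j ∈ L then 1 - (lam j - lam 0) * (mu i - mu 0) else 1) =
        1 - (lam j - lam 0) * (mu i - mu 0) := by
      rcases eq_or_ne j 0 with rfl | hj
      · simp
      · simp [hL j hj]
    have hexp : Complex.exp (mu i * lam j) = Complex.exp (mu 0 * (lam j - lam 0)) *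
        Complex.exp (mu i * lam 0) * Complex.exp ((mu i - mu 0) * (lam j - lam 0)) := by
      rw [← Complex.exp_add, ← Complex.exp_add]
      ring_nf
    simp only [dopRhoMatrix, C, of_apply, hfac, hexp]
    ring
  have hC : (of C).det = (-1) ^ K * E.det := by
    have hsub : (of fun i j : Fin K => of C i.succ j.succ - 1) = -E := by
      ext m n
      rw [neg_apply]
      simp only [C, E, of_apply]
      ring
    rw [det_eq_det_succ_sub_one (of C) (by simp [C]) (by simp [C]), hsub, det_neg,
      Fintype.card_fin]
  have hexp : Complex.exp (-∑ m, lam m * mu m) * ((∏ j, Complex.exp (mu 0 * (lam j - lam 0))) *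
      ∏ i, Complex.exp (mu i * lam 0)) =
      ∏ i : Fin K, Complex.exp (-((lam i.succ - lam 0) * (mu i.succ - mu 0))) := by
    rw [← Complex.exp_sum, ← Complex.exp_sum, ← Complex.exp_add, ← Complex.exp_add,
      ← Complex.exp_sum]
    congr 1
    rw [Finset.sum_neg_distrib, sum_sub_mul_sub_succ]
    ring
  have hdet : (dopRhoMatrix L lam mu).det = (∏ j, Complex.exp (mu 0 * (lam j - lam 0))) *
      ((∏ i, Complex.exp (mu i * lam 0)) * (of C).det) := by
    rw [hmat, ← det_mul_column, ← det_mul_row]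
    rfl
  rw [dopRho, hdet, hC, ← hexp]
  ring

end ClosedForm

theorem D11tBulk_succ {K : ℕ} (lam mu : Fin (K + 1) → ℂ) :
    D11tBulk (K + 1) lam mu = ((Real.pi : ℂ) ^ (K + 1))⁻¹ *
      (∏ i : Fin K, (1 + (lam i.succ - lam 0) * (mu i.succ - mu 0)) /
        ((lam i.succ - lam 0) ^ 2 * (mu i.succ - mu 0) ^ 2)) *
      (∏ i : Fin K, Complex.exp (-((lam i.succ - lam 0) * (mu i.succ - mu 0)))) *
      (of fun m n : Fin K => 1 - (1 - (mu m.succ - mu 0) * (lam n.succ - lam 0)) *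
        Complex.exp ((mu m.succ - mu 0) * (lam n.succ - lam 0))).det := by
  have hev : ∀ v : Fin (K + 1) → ℂ, ev0 v = v 0 := fun _ => dif_pos K.succ_pos
  rw [D11tBulk, Finset.prod_mul_distrib, hev, hev, ← mul_assoc]
  rfl

/-- the bulk conditional diagonal overlap as a product of commuting first-order
differential operators applied to the (holomorphically extended) eigenvalue correlation
function. -/
theorem statement10 (k : ℕ) (hk : 1 ≤ k) (lam mu : Fin k → ℂ) :
    D11tBulk k lam mu =
      (-1 : ℂ) ^ (k - 1) *
        (∏ i : Fin (k - 1),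
          (1 + (lam (sh1 i) - lam ⟨0, by omega⟩) * (mu (sh1 i) - mu ⟨0, by omega⟩)) /
            ((lam (sh1 i) - lam ⟨0, by omega⟩) ^ 2 * (mu (sh1 i) - mu ⟨0, by omega⟩) ^ 2)) *
        List.foldr Dop (rhoT k) ((List.finRange k).drop 1) lam mu := by
  obtain ⟨K, rfl⟩ : ∃ K, k = K + 1 := ⟨k - 1, by omega⟩
  have hdrop : (List.finRange (K + 1)).drop 1 = (List.finRange K).map Fin.succ := by
    rw [List.finRange_succ]
    rfl
  have hnodup : ((List.finRange K).map Fin.succ).Nodup :=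
    (List.nodup_finRange K).map (Fin.succ_injective K)
  have hall : ∀ j : Fin (K + 1), j ≠ 0 → j ∈ (List.finRange K).map Fin.succ := fun j hj => by
    obtain ⟨i, rfl⟩ := Fin.exists_succ_eq.2 hj
    exact List.mem_map_of_mem (List.mem_finRange i)
  rw [hdrop, foldr_dop_rhoT hnodup (by simp), dopRho_eq_of_forall_mem hall]
  have hsq : ((-1 : ℂ) ^ K) ^ 2 = 1 := by rw [pow_right_comm, neg_one_sq, one_pow]
  -- `ring1!` identifies `sh1 i`, `lam ⟨0, _⟩` and `Fin (K + 1 - 1)` with `i.succ`, `lam 0` and `Fin K`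
  linear_combination (norm := ring1!)
    ((-1 : ℂ) ^ K) ^ 2 * D11tBulk_succ lam mu - D11tBulk (K + 1) lam mu * hsq
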